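/- Let C be a coalgebra over a field K and M a finite-dimensional right C-comodule with coaction ρ : M → M ⊗ C. Then there exists a smallest finite-dimensional subcoalgebra cf_C(M) of C such that ρ(M) ⊆ M ⊗ cf_C(M). -/

import Mathlib

/-!
The coefficient coalgebra is the span of the slices `(f ⊗ id) (ρ m)`, for `f ∈ M*` and `m ∈ M`.
Since `M` is free, a tensor lies in `M ⊗ D` exactly when all its slices lie in `D`, so this span
is the smallest `D` with `ρ(M) ⊆ M ⊗ D`; it is finite-dimensional as the image of `M* × M` under
a bilinear map. Coassociativity rewrites `Δ ((f ⊗ id) (ρ m))` as `((f ⊗ id) ∘ ρ ⊗ id) (ρ m)`,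
which lies in `D ⊗ D` because `ρ m ∈ M ⊗ D` and `(f ⊗ id) ∘ ρ` takes values in `D`.
-/

open TensorProduct LinearMap

/-- `D` is a subcoalgebra of the `K`-coalgebra `C`: the comultiplication sends `D`
into the image of `D ⊗ D` in `C ⊗ C`. -/
def IsSubcoalgebra {K C : Type*} [CommSemiring K] [AddCommMonoid C] [Module K C]
    [Coalgebra K C] (D : Submodule K C) : Prop :=
  ∀ x ∈ D, Coalgebra.comul (R := K) x ∈
    LinearMap.range (TensorProduct.map D.subtype D.subtype)

section Slice

variable {R M N P L : Type*} [CommSemiring R] [AddCommMonoid M] [AddCommMonoid N]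
  [AddCommMonoid P] [AddCommMonoid L] [Module R M] [Module R N] [Module R P] [Module R L]

/-- The slice `(f ⊗ id) t` of a tensor `t ∈ M ⊗ N` by a functional `f ∈ M*`. -/
noncomputable def dualSlice : Module.Dual R M →ₗ[R] M ⊗[R] N →ₗ[R] N :=
  llcomp R _ _ _ (TensorProduct.lid R N).toLinearMap ∘ₗ rTensorHom N

@[simp]
theorem dualSlice_tmul (f : Module.Dual R M) (m : M) (n : N) :
    dualSlice f (m ⊗ₜ[R] n) = f m • n := by
  simp [dualSlice]

theorem dualSlice_lTensor (f : Module.Dual R M) (g : N →ₗ[R] P) (t : M ⊗[R] N) :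
    dualSlice f (g.lTensor M t) = g (dualSlice f t) := by
  induction t using TensorProduct.induction_on with
  | zero => simp
  | tmul m n => simp
  | add x y hx hy => simp only [map_add, hx, hy]

theorem dualSlice_assoc_tmul (f : Module.Dual R M) (s : M ⊗[R] P) (n : N) :
    dualSlice f (TensorProduct.assoc R M P N (s ⊗ₜ n)) = dualSlice f s ⊗ₜ n := by
  induction s using TensorProduct.induction_on with
  | zero => simp
  | tmul m p => simp [smul_tmul']
  | add x y hx hy => simp only [add_tmul, map_add, hx, hy]

theorem dualSlice_assoc_rTensor (f : Module.Dual R M) (φ : L →ₗ[R] M ⊗[R] P) (t : L ⊗[R] N) :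
    dualSlice f (TensorProduct.assoc R M P N (φ.rTensor N t)) =
      (dualSlice f ∘ₗ φ).rTensor N t := by
  induction t using TensorProduct.induction_on with
  | zero => simp
  | tmul l n => simp [dualSlice_assoc_tmul]
  | add x y hx hy => simp only [map_add, hx, hy]

theorem dualSlice_mem_of_mem_range_lTensor {D : Submodule R N} {t : M ⊗[R] N}
    (ht : t ∈ range (D.subtype.lTensor M)) (f : Module.Dual R M) : dualSlice f t ∈ D := by
  obtain ⟨y, rfl⟩ := ht
  rw [dualSlice_lTensor]
  exact (dualSlice f y).2

theorem mem_range_lTensor_subtype_iff [Module.Free R M] {D : Submodule R N} {t : M ⊗[R] N} :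
    t ∈ range (D.subtype.lTensor M) ↔ ∀ f : Module.Dual R M, dualSlice f t ∈ D := by
  classical
  refine ⟨dualSlice_mem_of_mem_range_lTensor, fun h => ?_⟩
  let b := Module.Free.chooseBasis R M
  -- expand `t = ∑ bᵢ ⊗ tᵢ`, where `tᵢ` is the slice of `t` by the `i`-th coordinate functional
  rw [← (equivFinsuppOfBasisLeft b).symm_apply_apply t, equivFinsuppOfBasisLeft_symm_apply]
  refine Submodule.sum_mem _ fun i _ => ?_
  rw [equivFinsuppOfBasisLeft_apply]
  exact ⟨b i ⊗ₜ ⟨_, h (b.coord i)⟩, rfl⟩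

theorem rTensor_mem_range_map_subtype {D : Submodule R N} {g : M →ₗ[R] N}
    (hg : range g ≤ D) {t : M ⊗[R] N} (ht : t ∈ range (D.subtype.lTensor M)) :
    g.rTensor N t ∈ range (map D.subtype D.subtype) := by
  obtain ⟨y, rfl⟩ := ht
  refine ⟨map (g.codRestrict D fun m => hg ⟨m, rfl⟩) id y, ?_⟩
  rw [← LinearMap.comp_apply, ← map_comp, ← LinearMap.comp_apply, rTensor_comp_lTensor]
  rfl

end Slice

section CoefficientSpace

variable {R M C : Type*} [CommSemiring R] [AddCommMonoid M] [AddCommMonoid C]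
  [Module R M] [Module R C]

noncomputable def coefficientSpace (ρ : M →ₗ[R] M ⊗[R] C) : Submodule R C :=
  Submodule.map₂ (dualSlice.compl₂ ρ) ⊤ ⊤

variable (ρ : M →ₗ[R] M ⊗[R] C)

theorem dualSlice_mem_coefficientSpace (f : Module.Dual R M) (m : M) :
    dualSlice f (ρ m) ∈ coefficientSpace ρ :=
  Submodule.apply_mem_map₂ _ Submodule.mem_top Submodule.mem_top

theorem coefficientSpace_le_iff [Module.Free R M] (D : Submodule R C) :
    coefficientSpace ρ ≤ D ↔ ∀ m, ρ m ∈ range (D.subtype.lTensor M) := by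
  simp only [coefficientSpace, Submodule.map₂_le, Submodule.mem_top, compl₂_apply, true_implies,
    mem_range_lTensor_subtype_iff]
  exact forall_comm

theorem mem_range_lTensor_coefficientSpace [Module.Free R M] (m : M) :
    ρ m ∈ range ((coefficientSpace ρ).subtype.lTensor M) :=
  (coefficientSpace_le_iff ρ _).1 le_rfl m

instance [Module.Free R M] [Module.Finite R M] : Module.Finite R (coefficientSpace ρ) :=
  Module.Finite.iff_fg.2 <| Submodule.FG.map₂ _ Module.Finite.fg_top Module.Finite.fg_top

theorem isSubcoalgebra_coefficientSpace [Coalgebra R C] [Module.Free R M]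
    (hcoassoc : ∀ m : M, TensorProduct.assoc R M C C (ρ.rTensor C (ρ m)) =
      (Coalgebra.comul (R := R)).lTensor M (ρ m)) :
    IsSubcoalgebra (coefficientSpace ρ) := by
  intro x hx
  refine (Submodule.map₂_le (r := (range (map (coefficientSpace ρ).subtype
    (coefficientSpace ρ).subtype)).comap Coalgebra.comul)).2 (fun f _ m _ => ?_) hx
  rw [Submodule.mem_comap, compl₂_apply, ← dualSlice_lTensor, ← hcoassoc, dualSlice_assoc_rTensor]
  refine rTensor_mem_range_map_subtype ?_ (mem_range_lTensor_coefficientSpace ρ m)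
  rintro _ ⟨m', rfl⟩
  exact dualSlice_mem_coefficientSpace ρ f m'

end CoefficientSpace

theorem exists_coefficient_coalgebra
    (K : Type*) [Field K] (C : Type*) [AddCommGroup C] [Module K C] [Coalgebra K C]
    (M : Type*) [AddCommGroup M] [Module K M] [FiniteDimensional K M]
    (ρ : M →ₗ[K] M ⊗[K] C)
    -- comodule coassociativity: (ρ ⊗ 1) ∘ ρ = (1 ⊗ Δ) ∘ ρ
    (hcoassoc : ∀ m : M, (TensorProduct.assoc K M C C)
        ((LinearMap.rTensor C ρ) (ρ m)) =
        (LinearMap.lTensor M (Coalgebra.comul (R := K))) (ρ m)) :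
    ∃ D : Submodule K C, IsSubcoalgebra D ∧ FiniteDimensional K D ∧
      (∀ m : M, ρ m ∈ LinearMap.range (LinearMap.lTensor M D.subtype)) ∧
      (∀ D' : Submodule K C, IsSubcoalgebra D' → FiniteDimensional K D' →
        (∀ m : M, ρ m ∈ LinearMap.range (LinearMap.lTensor M D'.subtype)) → D ≤ D') :=
  ⟨coefficientSpace ρ, isSubcoalgebra_coefficientSpace ρ hcoassoc, inferInstance,
    mem_range_lTensor_coefficientSpace ρ, fun D' _ _ hD' => (coefficientSpace_le_iff ρ D').2 hD'⟩
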